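/- There is a universal constant C > 0 such that the following holds. Let M ⊆ ℝ^d be bounded and ε > 0. For every β > 1, the ball carving partition Π of M with parameter ε is (ε, β, C·(dd(M,ε)+1)/β)-padded: every block has diameter ≤ ε, and for every x ∈ M, ℙ_{R,σ}[ B_{ε/β}(x) ∩ M ⊄ Π(x) ] ≤ C·(dd(M,ε)+1)/β, where dd(M,ε) is the ε-doubling dimension of M with the ℓ₂ metric inherited from ℝ^d. -/

import Mathlib

/-!
Every block lies in a ball of radius `R ≤ ε/2`. For padding, put `B = B_{ε/β}(x) ∩ M` and let
`k` be the `σ`-first centre whose `R`-ball reaches `B`. If `B` is not inside the block of `k`,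
then `R` lies in the window `(dist(u_k, B), dist(u_k, B) + 2ε/β]`, of probability `≤ 8/β`, and
`k` precedes the `s_k` centres at least as close to `B`, of probability `1/s_k`. The relevant
centres are `ε/4`-separated points of `B_ε(x)`, so three doubling steps bound their number by
`λ³`; as the `i`-th closest of them has `s_k ≥ i`, the union bound is at most
`(8/β) H_{λ³} ≤ 24 (dd(M,ε) + 1)/β`.
-/

open MeasureTheory Metric Set
open scoped ENNReal NNReal

noncomputable section

/-- The Euclidean space `ℝ^d` with the `ℓ₂` metric. -/
abbrev Euc (d : ℕ) := EuclideanSpace ℝ (Fin d)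

/-- The doubling constant of a metric space at scale `ε`: the smallest `λ : ℕ`
such that every ball of radius at most `ε` can be covered by `λ` balls of half
the radius. -/
def doublingConstant (M : Type*) [PseudoMetricSpace M] (ε : ℝ) : ℕ :=
  sInf {l : ℕ | ∀ (x : M) (r : ℝ), 0 < r → r ≤ ε →
    ∃ T : Finset M, T.card ≤ l ∧ ball x r ⊆ ⋃ y ∈ T, ball y (r / 2)}

/-- The `ε`-doubling dimension `dd(M,ε) = log₂ λ` of a metric space. -/
def ddim (M : Type*) [PseudoMetricSpace M] (ε : ℝ) : ℝ :=
  Real.logb 2 (doublingConstant M ε)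

/-- The block `Π̂(uᵢ) = B_R(uᵢ) \ ⋃_{j : σ(j) < σ(i)} B_R(uⱼ)` of the ball
carving partition built from the net `u`, radius `R` and order `σ`. -/
def carvBlock {d n : ℕ} (u : Fin n → Euc d) (R : ℝ) (σ : Equiv.Perm (Fin n))
    (i : Fin n) : Set (Euc d) :=
  ball (u i) R \ ⋃ j ∈ {j | σ j < σ i}, ball (u j) R

/-- The uniform probability measure on the interval `Ioc a b`. -/
def unifIoc (a b : ℝ) : Measure ℝ :=
  (volume (Set.Ioc a b))⁻¹ • volume.restrict (Set.Ioc a b)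

instance (n : ℕ) : MeasurableSpace (Equiv.Perm (Fin n)) := ⊤

/-- The uniform probability measure on permutations of `Fin n` (a uniformly
random linear order of the net). -/
def unifPerm (n : ℕ) : Measure (Equiv.Perm (Fin n)) :=
  (Measure.count (Set.univ : Set (Equiv.Perm (Fin n))))⁻¹ • Measure.count

/-- The joint distribution of the randomness `(R, σ)` of the ball carving
partition with parameter `ε`. -/
def carvMeasure (ε : ℝ) (n : ℕ) : Measure (ℝ × Equiv.Perm (Fin n)) :=
  (unifIoc (ε / 4) (ε / 2)).prod (unifPerm n)

/-- `doublingConstant X ε` is the least `l` with `DoublingAt X ε l`. -/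
def DoublingAt (X : Type*) [PseudoMetricSpace X] (ε : ℝ) (l : ℕ) : Prop :=
  ∀ (x : X) (r : ℝ), 0 < r → r ≤ ε →
    ∃ T : Finset X, T.card ≤ l ∧ ball x r ⊆ ⋃ y ∈ T, ball y (r / 2)

namespace DoublingAt

variable {X : Type*} [PseudoMetricSpace X] {ε : ℝ} {l : ℕ}

theorem exists_cover_pow (h : DoublingAt X ε l) (m : ℕ) (x : X) {r : ℝ} (hr : 0 < r)
    (hrε : r ≤ ε) : ∃ T : Finset X, T.card ≤ l ^ m ∧ ball x r ⊆ ⋃ y ∈ T, ball y (r / 2 ^ m) := by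
  classical
  induction m generalizing x r with
  | zero => exact ⟨{x}, by simp, by simp⟩
  | succ m ih =>
    obtain ⟨T, hTcard, hTcov⟩ := h x r hr hrε
    choose! T' hT'card hT'cov using fun y : X => ih y (half_pos hr) (by linarith)
    refine ⟨T.biUnion T', ?_, fun z hz => ?_⟩
    · calc (T.biUnion T').card ≤ ∑ y ∈ T, (T' y).card := Finset.card_biUnion_le
        _ ≤ T.card * l ^ m := Finset.sum_le_card_nsmul _ _ _ fun y _ => hT'card y
        _ ≤ l ^ (m + 1) := by rw [pow_succ']; exact Nat.mul_le_mul_right _ hTcard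
    · obtain ⟨y, hyT, hzy⟩ := mem_iUnion₂.mp (hTcov hz)
      obtain ⟨w, hwT', hzw⟩ := mem_iUnion₂.mp (hT'cov y hzy)
      refine mem_iUnion₂.mpr ⟨w, Finset.mem_biUnion.mpr ⟨y, hyT, hwT'⟩, ?_⟩
      rwa [pow_succ', ← div_div]

theorem one_le [Nonempty X] (h : DoublingAt X ε l) (hε : 0 < ε) : 1 ≤ l := by
  obtain ⟨x⟩ := ‹Nonempty X›
  obtain ⟨T, hTcard, hTcov⟩ := h x ε hε le_rfl
  obtain ⟨y, hyT, -⟩ := mem_iUnion₂.mp (hTcov (mem_ball_self hε))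
  exact hTcard.trans' (Finset.card_pos.mpr ⟨y, hyT⟩)

/-- Two points of an `r / 2 ^ m`-separated family cannot share a ball of radius
`r / 2 ^ (m + 1)`. -/
theorem card_le_pow_of_separated (h : DoublingAt X ε l) {ι : Type*} {K : Finset ι}
    {v : ι → X} {x : X} {r : ℝ} (hr : 0 < r) (hrε : r ≤ ε) (m : ℕ)
    (hv : ∀ k ∈ K, v k ∈ ball x r)
    (hsep : ∀ i ∈ K, ∀ j ∈ K, i ≠ j → r / 2 ^ m ≤ dist (v i) (v j)) :
    K.card ≤ l ^ (m + 1) := by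
  obtain ⟨T, hTcard, hTcov⟩ := h.exists_cover_pow (m + 1) x hr hrε
  have : Nonempty X := ⟨x⟩
  choose! c hcT hc using fun k (hk : k ∈ K) => mem_iUnion₂.mp (hTcov (hv k hk))
  refine (Finset.card_le_card_of_injOn c hcT fun i hi j hj hij => ?_).trans hTcard
  by_contra hne
  have hi' := mem_ball.mp (hc i hi)
  have hj' := mem_ball.mp (hc j hj)
  rw [hij] at hi'
  have := (hsep i hi j hj hne).trans (dist_triangle_right _ _ (c j))
  rw [pow_succ, ← div_div] at hi' hj'
  linarith

end DoublingAt

theorem doublingAt_doublingConstant {X : Type*} [PseudoMetricSpace X] {ε : ℝ}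
    (h : ∃ l, DoublingAt X ε l) : DoublingAt X ε (doublingConstant X ε) :=
  Nat.sInf_mem h

/-- Cover the unit ball of `E` by finitely many balls of radius `1/4`; after rescaling to
`ball x r`, each of them that meets `M` lies in a ball of radius `r/2` centred in `M`. -/
theorem exists_doublingAt_of_finiteDimensional {E : Type*} [NormedAddCommGroup E]
    [NormedSpace ℝ E] [FiniteDimensional ℝ E] (M : Set E) (ε : ℝ) : ∃ l, DoublingAt M ε l := by
  classical
  obtain ⟨F, hFfin, hFcov⟩ := totallyBounded_iff.mp
    (isCompact_closedBall (0 : E) 1).totallyBounded (1 / 4) (by norm_num)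
  refine ⟨hFfin.toFinset.card, fun x r hr _ => ?_⟩
  let pick : E → M := fun c =>
    if h : ∃ w : M, dist (w : E) (x + r • c) < r / 4 then h.choose else x
  refine ⟨hFfin.toFinset.image pick, Finset.card_image_le, fun z hz => ?_⟩
  have hzx : dist (z : E) x < r := hz
  have hv : r⁻¹ • ((z : E) - x) ∈ closedBall (0 : E) 1 := by
    rw [mem_closedBall, dist_zero_right, norm_smul, norm_inv, Real.norm_of_nonneg hr.le,
      ← dist_eq_norm, inv_mul_le_iff₀ hr, mul_one]
    exact hzx.le
  obtain ⟨c, hcF, hvc⟩ := mem_iUnion₂.mp (hFcov hv)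
  have hzc : dist (z : E) (x + r • c) < r / 4 := by
    have heq : (z : E) - (x + r • c) = r • (r⁻¹ • ((z : E) - x) - c) := by
      rw [smul_sub, smul_inv_smul₀ hr.ne']; abel
    rw [dist_eq_norm, heq, norm_smul, Real.norm_of_nonneg hr.le, ← dist_eq_norm]
    rw [mem_ball] at hvc
    linarith [mul_lt_mul_of_pos_left hvc hr]
  have hex : ∃ w : M, dist (w : E) (x + r • c) < r / 4 := ⟨z, hzc⟩
  have hpick : dist (pick c : E) (x + r • c) < r / 4 := by
    simp only [pick, dif_pos hex]
    exact hex.choose_spec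
  refine mem_iUnion₂.mpr ⟨pick c, Finset.mem_image_of_mem _ (hFfin.mem_toFinset.mpr hcF), ?_⟩
  rw [mem_ball, Subtype.dist_eq]
  linarith [dist_triangle_right (z : E) (pick c) (x + r • c)]

/-- Right multiplication by the transposition `swap k j` exchanges the permutations under
which `k` comes first in `S` with those under which `j` does, and these classes are disjoint
for distinct `j ∈ S`. -/
theorem card_perm_first_mul_card_le {α : Type*} [Fintype α] [DecidableEq α] [LinearOrder α]
    (S : Finset α) {k : α} (hk : k ∈ S) :
    (Finset.univ.filter fun σ : Equiv.Perm α => ∀ j ∈ S, σ k ≤ σ j).card * S.card ≤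
      Fintype.card (Equiv.Perm α) := by
  set first : α → Finset (Equiv.Perm α) :=
    fun a => Finset.univ.filter fun σ => ∀ j ∈ S, σ a ≤ σ j
  have swap_mem : ∀ a ∈ S, ∀ b ∈ S, ∀ σ ∈ first a, σ * Equiv.swap a b ∈ first b := by
    intro a ha b hb σ hσ
    simp only [first, Finset.mem_filter, Finset.mem_univ, true_and, Equiv.Perm.mul_apply,
      Equiv.swap_apply_right] at hσ ⊢
    intro j hj
    rcases eq_or_ne j a with rfl | hja
    · simpa using hσ b hb
    rcases eq_or_ne j b with rfl | hjb
    · simp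
    · rw [Equiv.swap_apply_of_ne_of_ne hja hjb]
      exact hσ j hj
  have card_first : ∀ j ∈ S, (first j).card = (first k).card := fun j hj =>
    (Finset.card_nbij' (· * Equiv.swap j k) (· * Equiv.swap k j)
      (fun σ hσ => swap_mem j hj k hk σ hσ) (fun σ hσ => swap_mem k hk j hj σ hσ)
      (fun σ _ => by simp [mul_assoc, Equiv.swap_comm j k])
      (fun σ _ => by simp [mul_assoc, Equiv.swap_comm k j]))
  have disjoint : (S : Set α).PairwiseDisjoint first := by
    intro a ha b hb hab
    refine Finset.disjoint_left.mpr fun σ hσa hσb => hab (σ.injective ?_)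
    simp only [first, Finset.mem_filter] at hσa hσb
    exact le_antisymm (hσa.2 b hb) (hσb.2 a ha)
  calc (first k).card * S.card = ∑ j ∈ S, (first j).card := by
        rw [Finset.sum_congr rfl card_first, Finset.sum_const, smul_eq_mul, mul_comm]
    _ = (S.biUnion first).card := (Finset.card_biUnion disjoint).symm
    _ ≤ Fintype.card (Equiv.Perm α) := Finset.card_le_univ _

instance (n : ℕ) : MeasurableSingletonClass (Equiv.Perm (Fin n)) := ⟨fun _ => trivial⟩

theorem count_univ_perm (n : ℕ) :
    Measure.count (univ : Set (Equiv.Perm (Fin n))) = Fintype.card (Equiv.Perm (Fin n)) := by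
  rw [Measure.count_apply_finite _ finite_univ, Finite.toFinset_univ, Finset.card_univ]

instance (n : ℕ) : IsProbabilityMeasure (unifPerm n) := by
  constructor
  rw [unifPerm, Measure.smul_apply, smul_eq_mul, count_univ_perm,
    ENNReal.inv_mul_cancel (by simp) (ENNReal.natCast_ne_top _)]

theorem unifPerm_first_le {n : ℕ} (S : Finset (Fin n)) {k : Fin n} (hk : k ∈ S) :
    unifPerm n {σ | ∀ j ∈ S, σ k ≤ σ j} ≤ (S.card : ℝ≥0∞)⁻¹ := by
  have hcount : Measure.count {σ : Equiv.Perm (Fin n) | ∀ j ∈ S, σ k ≤ σ j} =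
      (Finset.univ.filter fun σ : Equiv.Perm (Fin n) => ∀ j ∈ S, σ k ≤ σ j).card := by
    rw [← Measure.count_apply_finset]
    simp
  have hcard := card_perm_first_mul_card_le S hk
  rw [unifPerm, Measure.smul_apply, smul_eq_mul, count_univ_perm, hcount,
    ENNReal.le_inv_iff_mul_le, mul_assoc, ENNReal.inv_mul_le_iff (by simp) (by simp), mul_one]
  refine le_of_eq_of_le ?_ (Nat.cast_le.mpr hcard)
  push_cast
  -- the two filters differ only in their decidability instances
  congr

theorem isProbabilityMeasure_unifIoc {a b : ℝ} (hab : a < b) :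
    IsProbabilityMeasure (unifIoc a b) := by
  constructor
  rw [unifIoc, Measure.smul_apply, smul_eq_mul, Measure.restrict_apply_univ,
    ENNReal.inv_mul_cancel] <;> simp [hab]

theorem unifIoc_Ioc_le {a b : ℝ} (hab : a < b) (c e : ℝ) :
    unifIoc a b (Ioc c e) ≤ ENNReal.ofReal ((e - c) / (b - a)) := by
  rw [unifIoc, Measure.smul_apply, smul_eq_mul, Measure.restrict_apply measurableSet_Ioc,
    Real.volume_Ioc, ENNReal.ofReal_div_of_pos (by linarith), div_eq_mul_inv, mul_comm]
  gcongr
  exact (measure_mono inter_subset_left).trans_eq Real.volume_Ioc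

theorem isProbabilityMeasure_carvMeasure {ε : ℝ} (hε : 0 < ε) (n : ℕ) :
    IsProbabilityMeasure (carvMeasure ε n) := by
  have := isProbabilityMeasure_unifIoc (by linarith : ε / 4 < ε / 2)
  unfold carvMeasure
  infer_instance

theorem carvMeasure_compl_Ioc_prod (ε : ℝ) (n : ℕ) :
    carvMeasure ε n ((Ioc (ε / 4) (ε / 2))ᶜ ×ˢ univ) = 0 := by
  rw [carvMeasure, Measure.prod_prod, unifIoc, Measure.smul_apply,
    Measure.restrict_apply measurableSet_Ioc.compl, compl_inter_self]
  simp

theorem carvMeasure_Ioc_prod_first_le {ε : ℝ} (hε : 0 < ε) {n : ℕ} (a b : ℝ)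
    (S : Finset (Fin n)) {k : Fin n} (hk : k ∈ S) :
    carvMeasure ε n (Ioc a b ×ˢ {σ | ∀ j ∈ S, σ k ≤ σ j}) ≤
      ENNReal.ofReal ((b - a) / (ε / 4) / S.card) := by
  have hS : (0 : ℝ) < S.card := by exact_mod_cast Finset.card_pos.mpr ⟨k, hk⟩
  rw [carvMeasure, Measure.prod_prod, div_eq_mul_inv _ (S.card : ℝ),
    ENNReal.ofReal_mul' (inv_nonneg.mpr hS.le), ENNReal.ofReal_inv_of_pos hS,
    ENNReal.ofReal_natCast]
  have hIoc := unifIoc_Ioc_le (by linarith : ε / 4 < ε / 2) a b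
  rw [show ε / 2 - ε / 4 = ε / 4 by ring] at hIoc
  exact mul_le_mul' hIoc (unifPerm_first_le S hk)

theorem harmonic_mono : Monotone harmonic := fun _ _ h =>
  Finset.sum_le_sum_of_subset_of_nonneg (Finset.range_mono h) fun _ _ _ => by positivity

/-- Peeling off a `g`-maximal element `k` of `K` leaves all of `K` below it, so its term
is at most `1 / #K`. -/
theorem sum_inv_card_le_harmonic {ι α : Type*} [Fintype ι] [DecidableEq ι] [LinearOrder α]
    (g : ι → α) (K : Finset ι) :
    ∑ k ∈ K, ((Finset.univ.filter fun j => g j ≤ g k).card : ℝ)⁻¹ ≤ harmonic K.card := by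
  induction K using Finset.induction_on_max_value g with
  | empty => simp
  | insert k K hkK hmax ih =>
    have hcard : K.card + 1 ≤ (Finset.univ.filter fun j => g j ≤ g k).card := by
      rw [← Finset.card_insert_of_notMem hkK]
      refine Finset.card_le_card fun j hj => ?_
      rcases Finset.mem_insert.mp hj with rfl | hj
      · simp
      · simpa using hmax j hj
    rw [Finset.sum_insert hkK, Finset.card_insert_of_notMem hkK, harmonic_succ, add_comm]
    push_cast
    gcongr
    exact_mod_cast hcard

theorem harmonic_le_mul_logb_add_one {m l p : ℕ} (hl : 1 ≤ l) (hp : 1 ≤ p) (hm : m ≤ l ^ p) :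
    (harmonic m : ℝ) ≤ p * (Real.logb 2 l + 1) := by
  have hl' : (1 : ℝ) ≤ l := by exact_mod_cast hl
  have hp' : (1 : ℝ) ≤ p := by exact_mod_cast hp
  have hlog : Real.log l ≤ Real.logb 2 l := by
    rw [Real.logb, le_div_iff₀ (Real.log_pos one_lt_two)]
    nlinarith [Real.log_two_lt_d9, Real.log_nonneg hl']
  calc (harmonic m : ℝ) ≤ harmonic (l ^ p) := by exact_mod_cast harmonic_mono hm
    _ ≤ 1 + Real.log ↑(l ^ p) := harmonic_le_one_add_log _
    _ = 1 + p * Real.log l := by push_cast; rw [Real.log_pow]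
    _ ≤ p * (Real.logb 2 l + 1) := by nlinarith [Real.log_nonneg hl']

section Carving

variable {d n : ℕ} {u : Fin n → Euc d} {R : ℝ} {σ : Equiv.Perm (Fin n)}

theorem diam_carvBlock_le (i : Fin n) :
    ediam (carvBlock u R σ i) ≤ ENNReal.ofReal (2 * R) :=
  calc ediam (carvBlock u R σ i) ≤ ediam (ball (u i) R) := ediam_mono sdiff_subset
    _ ≤ 2 * ENNReal.ofReal R := by rw [← eball_ofReal]; exact ediam_eball_le
    _ = ENNReal.ofReal (2 * R) := by rw [ENNReal.ofReal_mul zero_le_two, ENNReal.ofReal_ofNat]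

theorem subset_carvBlock {B : Set (Euc d)} {k : Fin n} (hk : B ⊆ ball (u k) R)
    (hfirst : ∀ j, σ j < σ k → R ≤ infDist (u j) B) : B ⊆ carvBlock u R σ k := by
  refine fun y hy => ⟨hk hy, fun hmem => ?_⟩
  obtain ⟨j, hj, hyj⟩ := mem_iUnion₂.mp hmem
  have := (hfirst j hj).trans (infDist_le_dist_of_mem hy)
  rw [mem_ball'] at hyj
  linarith

theorem exists_first_center_of_forall_not_subset {B : Set (Euc d)} {x : Euc d} {t : ℝ}
    (hB : B ⊆ ball x t) (hnear : ∃ i, infDist (u i) B < R)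
    (hfail : ∀ i, ¬ B ⊆ carvBlock u R σ i) :
    ∃ k, infDist (u k) B < R ∧ R ≤ dist (u k) x + t ∧
      ∀ j, infDist (u j) B ≤ infDist (u k) B → σ k ≤ σ j := by
  set J := Finset.univ.filter fun j => infDist (u j) B < R
  obtain ⟨i, hi⟩ := hnear
  obtain ⟨k, hkJ, hkmin⟩ := J.exists_min_image σ ⟨i, by simpa [J] using hi⟩
  have hkR : infDist (u k) B < R := by simpa [J] using hkJ
  have hfirst : ∀ j, infDist (u j) B < R → σ k ≤ σ j :=
    fun j hj => hkmin j (by simpa [J] using hj)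
  refine ⟨k, hkR, ?_, fun j hj => hfirst j (hj.trans_lt hkR)⟩
  by_contra! hR
  refine hfail k (subset_carvBlock (fun y hy => ?_) fun j hj => ?_)
  · have hyx := mem_ball.mp (hB hy)
    rw [mem_ball]
    linarith [dist_triangle_right y (u k) x]
  · by_contra! h
    exact (hfirst j h).not_gt hj

end Carving

section Padding

variable {d n : ℕ} {M : Set (Euc d)} {u : Fin n → Euc d} {ε : ℝ}

theorem not_padded_subset {B : Set (Euc d)} {x : Euc d} {t : ℝ} (hxB : x ∈ B)
    (hB : B ⊆ ball x t) (hxnet : x ∈ ⋃ i, ball (u i) (ε / 4)) :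
    {p : ℝ × Equiv.Perm (Fin n) | ¬ ∃ i, B ⊆ carvBlock u p.1 p.2 i} ⊆
      (Ioc (ε / 4) (ε / 2))ᶜ ×ˢ univ ∪
        ⋃ k ∈ Finset.univ.filter (fun k => infDist (u k) B < ε / 2),
          Ioc (infDist (u k) B) (dist (u k) x + t) ×ˢ
            {σ | ∀ j ∈ Finset.univ.filter (fun j => infDist (u j) B ≤ infDist (u k) B),
              σ k ≤ σ j} := by
  rintro ⟨R, σ⟩ hfail
  by_cases hR : R ∈ Ioc (ε / 4) (ε / 2)
  · obtain ⟨i, hi⟩ := mem_iUnion.mp hxnet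
    have hnear : infDist (u i) B < R := by
      linarith [infDist_le_dist_of_mem (x := u i) hxB, mem_ball'.mp hi, hR.1]
    obtain ⟨k, hkR, hRk, hfirst⟩ := exists_first_center_of_forall_not_subset hB ⟨i, hnear⟩
      fun i hi => hfail ⟨i, hi⟩
    refine Or.inr (mem_iUnion₂.mpr ⟨k, ?_, ⟨hkR, hRk⟩, fun j hj => hfirst j ?_⟩)
    · simpa using hkR.trans_le hR.2
    · simpa using hj
  · exact Or.inl ⟨hR, trivial⟩

theorem card_near_centers_le {l : ℕ} (hε : 0 < ε) (hu : ∀ i, u i ∈ M)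
    (husep : ∀ i j, i ≠ j → ε / 4 ≤ dist (u i) (u j)) (hl : DoublingAt M ε l) {x : Euc d}
    (hx : x ∈ M) : (Finset.univ.filter fun k => dist (u k) x < ε).card ≤ l ^ 3 :=
  hl.card_le_pow_of_separated (v := fun k => (⟨u k, hu k⟩ : M)) (x := ⟨x, hx⟩) hε le_rfl 2
    (fun k hk => by simpa [Subtype.dist_eq] using hk) fun i _ j _ hij => by
      rw [Subtype.dist_eq]; norm_num; exact husep i j hij

theorem carvMeasure_not_padded_le {l : ℕ} {β : ℝ} (hε : 0 < ε) (hβ : 2 ≤ β)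
    (hu : ∀ i, u i ∈ M) (husep : ∀ i j, i ≠ j → ε / 4 ≤ dist (u i) (u j))
    (hunet : M ⊆ ⋃ i, ball (u i) (ε / 4)) (hl : DoublingAt M ε l) {x : Euc d} (hx : x ∈ M) :
    carvMeasure ε n {p | ¬ ∃ i, ball x (ε / β) ∩ M ⊆ carvBlock u p.1 p.2 i} ≤
      ENNReal.ofReal (24 * (Real.logb 2 l + 1) / β) := by
  set t := ε / β
  set B := ball x t ∩ M
  set g : Fin n → ℝ := fun k => infDist (u k) B
  set S : Fin n → Finset (Fin n) := fun k => Finset.univ.filter fun j => g j ≤ g k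
  set K := Finset.univ.filter fun k => g k < ε / 2
  have ht : 0 < t := by positivity
  have htε : t ≤ ε / 2 := by rw [div_le_div_iff_of_pos_left hε] <;> linarith
  have hxB : x ∈ B := ⟨mem_ball_self ht, hx⟩
  have hg : ∀ k, dist (u k) x - t ≤ g k := fun k =>
    (le_infDist ⟨x, hxB⟩).mpr fun y hy => by
      linarith [dist_triangle (u k) y x, mem_ball.mp hy.1]
  have hKcard : K.card ≤ l ^ 3 := by
    refine (Finset.card_le_card fun k hk => ?_).trans (card_near_centers_le hε hu husep hl hx)
    have : g k < ε / 2 := by simpa [K] using hk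
    simp only [Finset.mem_filter, Finset.mem_univ, true_and]
    linarith [hg k]
  have : Nonempty M := ⟨⟨x, hx⟩⟩
  have hsum : ∑ k ∈ K, ((S k).card : ℝ)⁻¹ ≤ 3 * (Real.logb 2 l + 1) := by
    exact_mod_cast (sum_inv_card_le_harmonic g K).trans
      (harmonic_le_mul_logb_add_one (p := 3) (hl.one_le hε) (by norm_num) hKcard)
  calc carvMeasure ε n {p | ¬ ∃ i, B ⊆ carvBlock u p.1 p.2 i}
      ≤ carvMeasure ε n ((Ioc (ε / 4) (ε / 2))ᶜ ×ˢ univ) + ∑ k ∈ K, carvMeasure ε n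
          (Ioc (g k) (dist (u k) x + t) ×ˢ {σ | ∀ j ∈ S k, σ k ≤ σ j}) :=
        (measure_mono (not_padded_subset hxB inter_subset_left (hunet hx))).trans <|
          (measure_union_le _ _).trans (add_le_add le_rfl (measure_biUnion_finset_le _ _))
    _ ≤ 0 + ∑ k ∈ K, ENNReal.ofReal (8 / β * ((S k).card : ℝ)⁻¹) := by
      rw [carvMeasure_compl_Ioc_prod]
      gcongr with k
      refine (carvMeasure_Ioc_prod_first_le hε _ _ (S k) (by simp [S])).trans
        (ENNReal.ofReal_le_ofReal ?_)
      rw [div_eq_mul_inv _ ((S k).card : ℝ)]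
      refine mul_le_mul_of_nonneg_right ?_ (by positivity)
      rw [div_le_iff₀ (by positivity)]
      have : 8 / β * (ε / 4) = 2 * t := by ring
      linarith [hg k]
    _ = ENNReal.ofReal (8 / β * ∑ k ∈ K, ((S k).card : ℝ)⁻¹) := by
      rw [zero_add, ← ENNReal.ofReal_sum_of_nonneg fun k _ => by positivity, Finset.mul_sum]
    _ ≤ ENNReal.ofReal (24 * (Real.logb 2 l + 1) / β) := by
      refine ENNReal.ofReal_le_ofReal ?_
      calc 8 / β * ∑ k ∈ K, ((S k).card : ℝ)⁻¹ ≤ 8 / β * (3 * (Real.logb 2 l + 1)) := by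
            gcongr
        _ = 24 * (Real.logb 2 l + 1) / β := by ring

end Padding

/-- Lemma 4: there is a universal constant `C > 0` such that for every bounded
`M ⊆ ℝ^d`, every `ε > 0` and every `β > 1`, the ball carving partition of `M`
with parameter `ε` (built from a finite `ε/4`-net `u : Fin n → ℝ^d` of `M`) is
`(ε, β, C·(dd(M,ε)+1)/β)`-padded: every block has diameter at most `ε`, and for
every `x ∈ M` the probability that `B_{ε/β}(x) ∩ M` is not contained in the
block of `x` is at most `C·(dd(M,ε)+1)/β`, where `dd(M,ε)` is the `ε`-doubling
dimension of `M` with the inherited `ℓ₂` metric. -/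
theorem stmt9 : ∃ C : ℝ, 0 < C ∧
    ∀ (d n : ℕ) (M : Set (Euc d)), Bornology.IsBounded M →
    ∀ (ε β : ℝ), 0 < ε → 1 < β →
    ∀ u : Fin n → Euc d, (∀ i, u i ∈ M) →
    (∀ i j, i ≠ j → ε / 4 ≤ dist (u i) (u j)) →
    M ⊆ (⋃ i, ball (u i) (ε / 4)) →
    ((∀ R ∈ Set.Ioc (ε / 4) (ε / 2), ∀ (σ : Equiv.Perm (Fin n)) (i : Fin n),
        EMetric.diam (carvBlock u R σ i) ≤ ENNReal.ofReal ε) ∧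
      ∀ x ∈ M, carvMeasure ε n
          {p | ¬ ∃ i, ball x (ε / β) ∩ M ⊆ carvBlock u p.1 p.2 i} ≤
        ENNReal.ofReal (C * (ddim M ε + 1) / β)) := by
  refine ⟨24, by norm_num, fun d n M _ ε β hε hβ u hu husep hunet =>
    ⟨fun R hR σ i => ?_, fun x hx => ?_⟩⟩
  · exact (diam_carvBlock_le i).trans (ENNReal.ofReal_le_ofReal (by linarith [hR.2]))
  have hl := doublingAt_doublingConstant (exists_doublingAt_of_finiteDimensional M ε)
  rcases le_or_gt 2 β with hβ2 | hβ2
  · exact carvMeasure_not_padded_le hε hβ2 hu husep hunet hl hx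
  · have : Nonempty M := ⟨⟨x, hx⟩⟩
    have := isProbabilityMeasure_carvMeasure hε n
    have hdd : 0 ≤ ddim M ε :=
      Real.logb_nonneg one_lt_two (by exact_mod_cast hl.one_le hε)
    refine prob_le_one.trans (ENNReal.one_le_ofReal.mpr ?_)
    rw [le_div_iff₀ (by linarith)]
    linarith
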